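/- arXiv:math/0604640 — 2 statements merged into one kernel-verified Lean document; each statement's English description precedes it below -/
import Mathlib

section
/- Let x, K > 0, r ≥ 0, T > 0, m ∈ ℝ. Then H(x, m, σ²) := x e^{m+σ²/2} Φ((log(x/K)+rT+m+σ²)/σ) - K e^{-rT} Φ((log(x/K)+rT+m)/σ) converges to (x e^m - K e^{-rT})⁺ as σ → 0⁺. -/
/-!
Put `d = log (x e^m / (K e^{-rT}))`. The two arguments of `Φ` are `d / σ + σ` and `d / σ`,
so as `σ → 0⁺` both `Φ`-terms tend to the same value `0`, `1/2` or `1` according to the sign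
of `d`, while `e^{m + σ²/2} → e^m`. The limit is `(x e^m - K e^{-rT})` times that value, and
since `d` has the sign of `x e^m - K e^{-rT}`, this is the positive part.
-/

open MeasureTheory ProbabilityTheory Filter Real Set

noncomputable section

/-- The standard normal cumulative distribution function `Φ`. -/
def stdNormalCDF (x : ℝ) : ℝ :=
  (Real.sqrt (2 * Real.pi))⁻¹ * ∫ u in Set.Iic x, Real.exp (-u ^ 2 / 2)

variable {Ω : Type*}

/-- `W` is a standard Brownian motion with respect to the filtration `ℱ` under the measure `μ`:
it starts at `0`, has a.s. continuous paths, is adapted, has Gaussian increments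
`W t - W s ∼ N(0, t - s)`, and its increments after time `s` are independent of `ℱ s`. -/
def IsBrownianMotion [m0 : MeasurableSpace Ω] (μ : Measure Ω) (ℱ : Filtration ℝ m0)
    (W : ℝ → Ω → ℝ) : Prop :=
  (∀ᵐ ω ∂μ, W 0 ω = 0) ∧
  (∀ᵐ ω ∂μ, Continuous fun t => W t ω) ∧
  (∀ t : ℝ, Measurable[ℱ t] (W t)) ∧
  (∀ s t : ℝ, 0 ≤ s → s ≤ t →
    Measure.map (fun ω => W t ω - W s ω) μ = gaussianReal 0 (Real.toNNReal (t - s))) ∧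
  (∀ s t : ℝ, 0 ≤ s → s ≤ t →
    ProbabilityTheory.Indep
      (MeasurableSpace.comap (fun ω => W t ω - W s ω) inferInstance) (ℱ s) μ)

/-- Left-point dyadic Riemann sum approximating the Itô integral `∫₀ᵗ H dW`. -/
def itoSum (W H : ℝ → Ω → ℝ) (t : ℝ) (n : ℕ) (ω : Ω) : ℝ :=
  ∑ i ∈ Finset.range (2 ^ n),
    H (t * i / 2 ^ n) ω * (W (t * (i + 1) / 2 ^ n) ω - W (t * i / 2 ^ n) ω)

/-- `I` is (a version of) the Itô integral process `t ↦ ∫₀ᵗ H dW` under the measure `μ`: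
for every `t ≥ 0` the left-point dyadic Riemann sums converge in probability to `I t`. -/
def IsItoIntegral [MeasurableSpace Ω] (μ : Measure Ω) (W H I : ℝ → Ω → ℝ) : Prop :=
  ∀ t : ℝ, 0 ≤ t → TendstoInMeasure μ (fun n => itoSum W H t n) atTop (I t)

open scoped Topology

lemma integrable_exp_neg_sq_div_two : Integrable fun u : ℝ => exp (-u ^ 2 / 2) := by
  simpa [neg_div, div_eq_inv_mul] using integrable_exp_neg_mul_sq (b := (2 : ℝ)⁻¹) (by norm_num)

lemma integral_exp_neg_sq_div_two : ∫ u : ℝ, exp (-u ^ 2 / 2) = √(2 * π) := by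
  simpa [neg_div, div_eq_inv_mul, mul_comm] using integral_gaussian (2 : ℝ)⁻¹

lemma continuous_stdNormalCDF : Continuous stdNormalCDF := by
  refine continuous_const.mul (continuous_iff_continuousAt.2 fun y => ?_)
  exact (integrable_exp_neg_sq_div_two.integrableOn.continuousOn_Iic_primitive_Iic
    (a₀ := y + 1)).continuousAt (Iic_mem_nhds (lt_add_one y))

lemma tendsto_stdNormalCDF_atTop : Tendsto stdNormalCDF atTop (𝓝 1) := by
  have h := (aecover_Iic (μ := volume) tendsto_id).integral_tendsto_of_countably_generated
    integrable_exp_neg_sq_div_two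
  rw [integral_exp_neg_sq_div_two] at h
  have hpos : 0 < √(2 * π) := Real.sqrt_pos.2 (by positivity)
  have h' := h.const_mul (√(2 * π))⁻¹
  rwa [inv_mul_cancel₀ hpos.ne'] at h'

lemma stdNormalCDF_neg (y : ℝ) : stdNormalCDF (-y) = 1 - stdNormalCDF y := by
  have hsplit := intervalIntegral.integral_Iic_add_Ioi (b := y)
    integrable_exp_neg_sq_div_two.integrableOn integrable_exp_neg_sq_div_two.integrableOn
  rw [integral_exp_neg_sq_div_two] at hsplit
  have hrefl : ∫ u in Iic (-y), exp (-u ^ 2 / 2) = ∫ u in Ioi y, exp (-u ^ 2 / 2) := by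
    rw [← integral_comp_neg_Ioi]
    simp only [neg_sq]
  have hpos : 0 < √(2 * π) := Real.sqrt_pos.2 (by positivity)
  rw [stdNormalCDF, stdNormalCDF, hrefl, eq_sub_of_add_eq' hsplit, mul_sub,
    inv_mul_cancel₀ hpos.ne']

lemma stdNormalCDF_zero : stdNormalCDF 0 = 1 / 2 := by
  linarith [neg_zero (G := ℝ) ▸ stdNormalCDF_neg 0]

lemma tendsto_stdNormalCDF_atBot : Tendsto stdNormalCDF atBot (𝓝 0) := by
  have h := (tendsto_stdNormalCDF_atTop.comp tendsto_neg_atBot_atTop).const_sub 1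
  simpa [Function.comp_def, stdNormalCDF_neg] using h

def heaviside (d : ℝ) : ℝ := if d < 0 then 0 else if d = 0 then 1 / 2 else 1

lemma sub_mul_heaviside_log_div {A B : ℝ} (hA : 0 < A) (hB : 0 < B) :
    (A - B) * heaviside (log (A / B)) = max (A - B) 0 := by
  rcases lt_trichotomy A B with hAB | rfl | hAB
  · have hlog : log (A / B) < 0 := log_neg (div_pos hA hB) ((div_lt_one hB).2 hAB)
    simp [heaviside, hlog, hAB.le]
  · simp
  · have hlog : 0 < log (A / B) := log_pos ((one_lt_div hB).2 hAB)
    simp [heaviside, hlog.not_gt, hlog.ne', hAB.le]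

lemma tendsto_stdNormalCDF_div_add (d : ℝ) {g : ℝ → ℝ} (hg : Tendsto g (𝓝[>] 0) (𝓝 0)) :
    Tendsto (fun σ => stdNormalCDF (d / σ + g σ)) (𝓝[>] 0) (𝓝 (heaviside d)) := by
  rcases lt_trichotomy d 0 with hd | rfl | hd
  · have harg : Tendsto (fun σ => d / σ + g σ) (𝓝[>] 0) atBot :=
      (tendsto_inv_nhdsGT_zero.const_mul_atTop_of_neg hd).atBot_add hg
    rw [heaviside, if_pos hd]
    exact tendsto_stdNormalCDF_atBot.comp harg
  · simp only [heaviside, lt_irrefl, if_false, if_true, zero_div, zero_add]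
    rw [← stdNormalCDF_zero]
    exact (continuous_stdNormalCDF.tendsto 0).comp hg
  · have harg : Tendsto (fun σ => d / σ + g σ) (𝓝[>] 0) atTop :=
      (tendsto_inv_nhdsGT_zero.const_mul_atTop hd).atTop_add hg
    rw [heaviside, if_neg hd.not_gt, if_neg hd.ne']
    exact tendsto_stdNormalCDF_atTop.comp harg

theorem H_tendsto_intrinsic_value_general
    (x K r T m : ℝ) (hx : 0 < x) (hK : 0 < K) :
    Tendsto (fun σ : ℝ =>
        x * Real.exp (m + σ ^ 2 / 2)
            * stdNormalCDF ((Real.log (x / K) + r * T + m + σ ^ 2) / σ)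
          - K * Real.exp (-(r * T))
            * stdNormalCDF ((Real.log (x / K) + r * T + m) / σ))
      (nhdsWithin 0 (Set.Ioi 0))
      (nhds (max (x * Real.exp m - K * Real.exp (-(r * T))) 0)) := by
  have hd : log (x / K) + r * T + m = log (x * exp m / (K * exp (-(r * T)))) := by
    rw [log_div hx.ne' hK.ne', log_div (by positivity) (by positivity),
      log_mul hx.ne' (exp_pos _).ne', log_mul hK.ne' (exp_pos _).ne', log_exp, log_exp]
    ring
  rw [← sub_mul_heaviside_log_div (by positivity) (by positivity), ← hd, sub_mul]
  generalize log (x / K) + r * T + m = d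
  have hexp : Tendsto (fun σ : ℝ => x * exp (m + σ ^ 2 / 2)) (𝓝[>] 0) (𝓝 (x * exp m)) := by
    have h := (by fun_prop : Continuous fun σ : ℝ => x * exp (m + σ ^ 2 / 2)).tendsto 0
    simpa using h.mono_left nhdsWithin_le_nhds
  have hΦ₁ := tendsto_stdNormalCDF_div_add d (g := fun σ => σ) nhdsWithin_le_nhds
  have hΦ₂ : Tendsto (fun σ => stdNormalCDF (d / σ)) (𝓝[>] 0) (𝓝 (heaviside d)) := by
    simpa using tendsto_stdNormalCDF_div_add d tendsto_const_nhds
  convert (hexp.mul hΦ₁).sub (tendsto_const_nhds.mul hΦ₂) using 4 with σ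
  rw [add_div, sq, mul_self_div_self]

/-- `H(x, m, σ²) → (x e^m - K e^{-rT})⁺` as `σ → 0⁺`. -/
theorem H_tendsto_intrinsic_value
    (x K r T m : ℝ) (hx : 0 < x) (hK : 0 < K) (hr : 0 ≤ r) (hT : 0 < T) :
    Tendsto (fun σ : ℝ =>
        x * Real.exp (m + σ ^ 2 / 2)
            * stdNormalCDF ((Real.log (x / K) + r * T + m + σ ^ 2) / σ)
          - K * Real.exp (-(r * T))
            * stdNormalCDF ((Real.log (x / K) + r * T + m) / σ))
      (nhdsWithin 0 (Set.Ioi 0))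
      (nhds (max (x * Real.exp m - K * Real.exp (-(r * T))) 0)) :=
  H_tendsto_intrinsic_value_general x K r T m hx hK
end
end

section
/- Let x, K > 0, r ≥ 0, T > 0. The function σ ↦ H(x, -σ²/2, σ²) = x Φ((log(x/K)+rT+σ²/2)/σ) - K e^{-rT} Φ((log(x/K)+rT-σ²/2)/σ) is nondecreasing in σ on (0, ∞). -/
open MeasureTheory ProbabilityTheory Filter Real Set

noncomputable section

variable {Ω : Type*}

/-!
With `L = log(x/K) + rT` and `d₁,₂ = (L ± σ²/2)/σ` one has `d₂² = d₁² - 2L`, which is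
the vega identity `K e^{-rT} φ(d₂) = x φ(d₁)`. Hence the two `φ`-terms of the σ-derivative
of the price combine to `x φ(d₁) (d₁' - d₂') = x φ(d₁) ≥ 0`, because `d₁ - d₂ = σ`.
-/

theorem hasDerivAt_integral_Iic {E : Type*} [NormedAddCommGroup E] [NormedSpace ℝ E]
    [CompleteSpace E] {f : ℝ → E} (hf : Continuous f) (hfi : Integrable f) (y : ℝ) :
    HasDerivAt (fun z => ∫ u in Iic z, f u) (f y) y := by
  have hsplit :
      (fun z => ∫ u in Iic z, f u) = fun z => (∫ u in Iic y, f u) + ∫ u in y..z, f u := by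
    funext z
    rw [← intervalIntegral.integral_Iic_sub_Iic hfi.integrableOn hfi.integrableOn]
    abel
  rw [hsplit]
  exact (intervalIntegral.integral_hasDerivAt_right (hf.intervalIntegrable y y)
    hf.aestronglyMeasurable.stronglyMeasurableAtFilter hf.continuousAt).const_add _

theorem hasDerivAt_stdNormalCDF (y : ℝ) :
    HasDerivAt stdNormalCDF ((√(2 * π))⁻¹ * exp (-y ^ 2 / 2)) y := by
  have hfi : Integrable fun u : ℝ => exp (-u ^ 2 / 2) := by
    simpa [neg_div, div_eq_inv_mul] using integrable_exp_neg_mul_sq (b := 2⁻¹) (by norm_num)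
  exact (hasDerivAt_integral_Iic (by fun_prop) hfi y).const_mul _

theorem hasDerivAt_add_mul_sq_div (L a : ℝ) {σ : ℝ} (hσ : σ ≠ 0) :
    HasDerivAt (fun s => (L + a * s ^ 2) / s) (a - L / σ ^ 2) σ := by
  have h := (((hasDerivAt_pow 2 σ).const_mul a).const_add L).div (hasDerivAt_id σ) hσ
  refine h.congr_deriv ?_
  simp only [id, Nat.cast_ofNat]
  field_simp
  ring

theorem exp_neg_sq_half_sub_eq (L : ℝ) {σ : ℝ} (hσ : σ ≠ 0) :
    exp (-((L - σ ^ 2 / 2) / σ) ^ 2 / 2) = exp L * exp (-((L + σ ^ 2 / 2) / σ) ^ 2 / 2) := by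
  rw [← exp_add]
  congr 1
  field_simp
  ring

/-- `H(x, -σ²/2, σ²)` in terms of the log-moneyness `L = log(x/K) + rT`, through which the
discounted strike is `K e^{-rT} = x e^{-L}`. -/
def callPrice (x L σ : ℝ) : ℝ :=
  x * stdNormalCDF ((L + σ ^ 2 / 2) / σ) - x * exp (-L) * stdNormalCDF ((L - σ ^ 2 / 2) / σ)

theorem hasDerivAt_callPrice (x L : ℝ) {σ : ℝ} (hσ : σ ≠ 0) :
    HasDerivAt (callPrice x L)
      (x * ((√(2 * π))⁻¹ * exp (-((L + σ ^ 2 / 2) / σ) ^ 2 / 2))) σ := by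
  have hd₁ : HasDerivAt (fun s => (L + s ^ 2 / 2) / s) (1 / 2 - L / σ ^ 2) σ := by
    convert hasDerivAt_add_mul_sq_div L (1 / 2) hσ using 2 with s
    ring
  have hd₂ : HasDerivAt (fun s => (L - s ^ 2 / 2) / s) (-1 / 2 - L / σ ^ 2) σ := by
    convert hasDerivAt_add_mul_sq_div L (-1 / 2) hσ using 2 with s
    ring
  have h := (((hasDerivAt_stdNormalCDF _).comp σ hd₁).const_mul x).sub
    (((hasDerivAt_stdNormalCDF _).comp σ hd₂).const_mul (x * exp (-L)))
  refine h.congr_deriv ?_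
  have hcancel : exp (-L) * exp L = 1 := by rw [← exp_add, neg_add_cancel, exp_zero]
  rw [exp_neg_sq_half_sub_eq L hσ]
  linear_combination (-(x * (√(2 * π))⁻¹ * exp (-((L + σ ^ 2 / 2) / σ) ^ 2 / 2)
    * (-1 / 2 - L / σ ^ 2))) * hcancel

theorem monotoneOn_callPrice {x : ℝ} (hx : 0 ≤ x) (L : ℝ) :
    MonotoneOn (callPrice x L) (Ioi 0) := by
  have hderiv (σ : ℝ) (hσ : σ ∈ Ioi 0) := hasDerivAt_callPrice x L (ne_of_gt hσ)
  refine monotoneOn_of_hasDerivWithinAt_nonneg (convex_Ioi 0)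
    (f' := fun σ => x * ((√(2 * π))⁻¹ * exp (-((L + σ ^ 2 / 2) / σ) ^ 2 / 2)))
    (fun σ hσ => (hderiv σ hσ).continuousAt.continuousWithinAt) ?_ ?_
  · rw [interior_Ioi]
    exact fun σ hσ => (hderiv σ hσ).hasDerivWithinAt
  · intro σ _
    positivity

theorem H_monotone_in_volatility_general
    (x K r T : ℝ) (hx : 0 < x) (hK : 0 < K) :
    MonotoneOn (fun σ : ℝ =>
        x * stdNormalCDF ((Real.log (x / K) + r * T + σ ^ 2 / 2) / σ)
          - K * Real.exp (-(r * T))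
            * stdNormalCDF ((Real.log (x / K) + r * T - σ ^ 2 / 2) / σ))
      (Set.Ioi 0) := by
  have hstrike : K * exp (-(r * T)) = x * exp (-(log (x / K) + r * T)) := by
    rw [neg_add, exp_add, exp_neg (log _), exp_log (div_pos hx hK)]
    field_simp
  simp_rw [hstrike]
  exact monotoneOn_callPrice hx.le _

/-- `σ ↦ H(x, -σ²/2, σ²)` is nondecreasing on `(0, ∞)`. -/
theorem H_monotone_in_volatility
    (x K r T : ℝ) (hx : 0 < x) (hK : 0 < K) (hr : 0 ≤ r) (hT : 0 < T) :
    MonotoneOn (fun σ : ℝ =>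
        x * stdNormalCDF ((Real.log (x / K) + r * T + σ ^ 2 / 2) / σ)
          - K * Real.exp (-(r * T))
            * stdNormalCDF ((Real.log (x / K) + r * T - σ ^ 2 / 2) / σ))
      (Set.Ioi 0) :=
  H_monotone_in_volatility_general x K r T hx hK
end
end
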